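/- Consider a transversely isotropic Voigt matrix c with parameters (a,b,c,d,e) (rows: [a,b,c,0,0,0],[b,a,c,0,0,0],[c,c,d,0,0,0], diag(e,e,(a−b)/2) in the lower-right block). A quadratic displacement field with Voigt strain ε_V(x) = xV₁ + yV₂ + zV₃ solves the elasticity system ∇·(c ε_V) = 0 if and only if the vector (a,b,c,d,e) ∈ ℝ⁵ is orthogonal to the three vectors (V₁₁ + V₂₆/2, V₁₂ − V₂₆/2, V₁₃, 0, V₃₅), (V₁₆/2 + V₂₂, −V₁₆/2 + V₂₁, V₂₃, 0, V₃₄), and (0, 0, V₃₁ + V₃₂, V₃₃, V₁₅ + V₂₄). -/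
import Mathlib


open scoped Matrix

/-- Partial derivative `∂ᵢ g` of a scalar function on ℝ³. -/
noncomputable def pd (i : Fin 3) (g : (Fin 3 → ℝ) → ℝ) (x : Fin 3 → ℝ) : ℝ :=
  fderiv ℝ g x (Pi.single i 1)

/-- The 3×6 Voigt divergence operator. -/
noncomputable def voigtDiv (F : (Fin 3 → ℝ) → Fin 6 → ℝ) (x : Fin 3 → ℝ) : Fin 3 → ℝ :=
  ![pd 0 (fun y => F y 0) x + pd 2 (fun y => F y 4) x + pd 1 (fun y => F y 5) x,
    pd 1 (fun y => F y 1) x + pd 2 (fun y => F y 3) x + pd 0 (fun y => F y 5) x,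
    pd 2 (fun y => F y 2) x + pd 1 (fun y => F y 3) x + pd 0 (fun y => F y 4) x]

/-- The transversely isotropic Voigt matrix with parameters `(a,b,c,d,e)`. -/
noncomputable def TImat (a b c d e : ℝ) : Matrix (Fin 6) (Fin 6) ℝ :=
  !![a, b, c, 0, 0, 0;
     b, a, c, 0, 0, 0;
     c, c, d, 0, 0, 0;
     0, 0, 0, e, 0, 0;
     0, 0, 0, 0, e, 0;
     0, 0, 0, 0, 0, (a - b) / 2]

lemma cons_val_5' {α : Type*} (x : α) (u : Fin 5 → α) : Matrix.vecCons x u 5 = u 4 := rfl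

lemma TImat_mulVec (a b c d e : ℝ) (V : Fin 6 → ℝ) :
    TImat a b c d e *ᵥ V =
      ![a * V 0 + b * V 1 + c * V 2, b * V 0 + a * V 1 + c * V 2,
        c * V 0 + c * V 1 + d * V 2, e * V 3, e * V 4, (a - b) / 2 * V 5] := by
  funext k
  fin_cases k <;>
    simp [TImat, Matrix.mulVec, dotProduct, Fin.sum_univ_six, cons_val_5']

lemma pd_lin (i : Fin 3) (p q r : ℝ) (x : Fin 3 → ℝ) :
    pd i (fun y => y 0 * p + y 1 * q + y 2 * r) x = ![p, q, r] i := by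
  have h : (fun y : Fin 3 → ℝ => y 0 * p + y 1 * q + y 2 * r) =
      (p • ContinuousLinearMap.proj (R := ℝ) (φ := fun _ : Fin 3 => ℝ) 0
        + q • ContinuousLinearMap.proj 1 + r • ContinuousLinearMap.proj 2 :
        (Fin 3 → ℝ) →L[ℝ] ℝ) := by
    funext y
    simp [mul_comm]
  unfold pd
  rw [h, ContinuousLinearMap.fderiv]
  fin_cases i <;> simp [Pi.single_apply]

lemma pd_mulVec (i : Fin 3) (k : Fin 6) (M : Matrix (Fin 6) (Fin 6) ℝ)
    (V₁ V₂ V₃ : Fin 6 → ℝ) (x : Fin 3 → ℝ) :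
    pd i (fun y => (M *ᵥ (y 0 • V₁ + y 1 • V₂ + y 2 • V₃)) k) x =
      ![(M *ᵥ V₁) k, (M *ᵥ V₂) k, (M *ᵥ V₃) k] i := by
  have h : (fun y : Fin 3 → ℝ => (M *ᵥ (y 0 • V₁ + y 1 • V₂ + y 2 • V₃)) k) =
      fun y => y 0 * (M *ᵥ V₁) k + y 1 * (M *ᵥ V₂) k + y 2 * (M *ᵥ V₃) k := by
    funext y
    simp [Matrix.mulVec_add, Matrix.mulVec_smul, smul_eq_mul]
  rw [h, pd_lin]

/-- A quadratic displacement field with Voigt strain `ε_V(x) = xV₁ + yV₂ + zV₃`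
solves the transversely isotropic elasticity system iff `(a,b,c,d,e)` is orthogonal
to the three stated vectors. -/
theorem stmt_15 (a b c d e : ℝ) (V₁ V₂ V₃ : Fin 6 → ℝ) :
    (∀ x : Fin 3 → ℝ,
        voigtDiv (fun y => TImat a b c d e *ᵥ (y 0 • V₁ + y 1 • V₂ + y 2 • V₃)) x = 0) ↔
      (![a, b, c, d, e] ⬝ᵥ
          ![V₁ 0 + V₂ 5 / 2, V₁ 1 - V₂ 5 / 2, V₁ 2, 0, V₃ 4] = 0 ∧
       ![a, b, c, d, e] ⬝ᵥ
          ![V₁ 5 / 2 + V₂ 1, -(V₁ 5) / 2 + V₂ 0, V₂ 2, 0, V₃ 3] = 0 ∧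
       ![a, b, c, d, e] ⬝ᵥ
          ![0, 0, V₃ 0 + V₃ 1, V₃ 2, V₁ 4 + V₂ 3] = 0) := by
  simp only [voigtDiv, pd_mulVec]
  simp only [TImat_mulVec, cons_val_5', Matrix.cons_val_zero, Matrix.cons_val_one,
    Matrix.head_cons, Matrix.cons_val_two, Matrix.tail_cons, Matrix.cons_val_three,
    Matrix.cons_val_four, Matrix.head_fin_const]
  constructor
  · intro h
    have h0 := congrFun (h 0) 0
    have h1 := congrFun (h 0) 1
    have h2 := congrFun (h 0) 2
    simp [dotProduct, Fin.sum_univ_five, cons_val_5'] at h0 h1 h2 ⊢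
    refine ⟨by linarith, by linarith, by linarith⟩
  · rintro ⟨h0, h1, h2⟩ x
    simp [dotProduct, Fin.sum_univ_five, cons_val_5'] at h0 h1 h2
    funext i
    fin_cases i <;> simp [cons_val_5'] <;> linarith
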